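/- arXiv:1504.08191 — 2 statements merged into one kernel-verified Lean document; each statement's English description precedes it below -/
import Mathlib

section
/- A topological dynamical system (X,T) on a compact metric space is uniformly rigid if and only if the induced hyperspace system (K(X), T_K) is uniformly rigid, if and only if (K(X), T_K) is weakly rigid. -/
open TopologicalSpace Metric Set

/-- The induced map `T_K` on the hyperspace of nonempty compact subsets. -/
noncomputable def inducedMap {X : Type*} [MetricSpace X] {T : X → X} (hT : Continuous T)
    (A : NonemptyCompacts X) : NonemptyCompacts X :=
  ⟨⟨T '' A, A.isCompact.image hT⟩, A.nonempty.image T⟩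

/-- A system is weakly rigid if every finite tuple of points is recurrent under the
product map. -/
def WeaklyRigid {Y : Type*} [MetricSpace Y] (T : Y → Y) : Prop :=
  ∀ (n : ℕ) (A : Fin n → Y), ∀ ε > (0:ℝ), ∀ N : ℕ, ∃ j ≥ N, ∀ i, dist (T^[j] (A i)) (A i) < ε

/-- A system is uniformly rigid if for every `ε > 0` there is `n ≥ 1` with
`d(T^n x, x) < ε` for every `x`. -/
def UniformlyRigid {X : Type*} [MetricSpace X] (T : X → X) : Prop :=
  ∀ ε > (0:ℝ), ∃ n ≥ 1, ∀ x, dist (T^[n] x) x < ε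

lemma inducedMap_iterate {X : Type*} [MetricSpace X] {T : X → X} (hT : Continuous T)
    (n : ℕ) (A : NonemptyCompacts X) :
    ((inducedMap hT)^[n] A : Set X) = T^[n] '' A := by
  induction n with
  | zero => simp
  | succ n ih =>
    rw [Function.iterate_succ_apply']
    show T '' ((inducedMap hT)^[n] A : Set X) = _
    rw [ih, Function.iterate_succ', Set.image_comp]

/-- Uniform rigidity implies weak rigidity (general metric space). -/
lemma UniformlyRigid.weaklyRigid {Y : Type*} [MetricSpace Y] {S : Y → Y}
    (h : UniformlyRigid S) : WeaklyRigid S := by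
  intro n A ε hε N
  set M : ℕ := max N 1 with hM
  have hM1 : 1 ≤ M := le_max_right _ _
  have hMpos : (0:ℝ) < M := by positivity
  obtain ⟨m, hm1, hm⟩ := h (ε / (2*M)) (by positivity)
  -- iterate: dist (S^[k*m] y) y < k * (ε/M) for k ≥ 1
  have key : ∀ (k : ℕ) (y : Y), dist (S^[k*m] y) y ≤ k * (ε / (2*M)) := by
    intro k
    induction k with
    | zero => intro y; simp
    | succ k ih =>
      intro y
      have : S^[(k+1)*m] y = S^[k*m] (S^[m] y) := by
        rw [← Function.iterate_add_apply]; ring_nf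
      rw [this]
      calc dist (S^[k*m] (S^[m] y)) y
          ≤ dist (S^[k*m] (S^[m] y)) (S^[m] y) + dist (S^[m] y) y := dist_triangle _ _ _
        _ ≤ k * (ε / (2*M)) + ε / (2*M) := add_le_add (ih _) (hm y).le
        _ = (k+1 : ℕ) * (ε / (2*M)) := by push_cast; ring
  refine ⟨M * m, le_trans (le_max_left _ _) (Nat.le_mul_of_pos_right M (by omega)), ?_⟩
  intro i
  have hkey := key M (A i)
  have heq : (M:ℝ) * (ε / (2*M)) = ε / 2 := by field_simp
  rw [heq] at hkey
  linarith

lemma ur_base_to_hyper {X : Type*} [MetricSpace X] [CompactSpace X]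
    {T : X → X} (hT : Continuous T) (h : UniformlyRigid T) :
    UniformlyRigid (inducedMap hT) := by
  intro ε hε
  obtain ⟨n, hn1, hn⟩ := h (ε / 2) (by positivity)
  refine ⟨n, hn1, ?_⟩
  intro A
  rw [NonemptyCompacts.dist_eq, inducedMap_iterate]
  have hle : hausdorffDist (T^[n] '' (A : Set X)) (A : Set X) ≤ ε / 2 := by
    apply hausdorffDist_le_of_mem_dist (by positivity)
    · rintro y ⟨x, hx, rfl⟩
      exact ⟨x, hx, (hn x).le⟩
    · intro x hx
      exact ⟨T^[n] x, Set.mem_image_of_mem _ hx, by rw [dist_comm]; exact (hn x).le⟩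
  linarith

lemma ur_hyper_to_base {X : Type*} [MetricSpace X] [CompactSpace X]
    {T : X → X} (hT : Continuous T) (h : UniformlyRigid (inducedMap hT)) :
    UniformlyRigid T := by
  intro ε hε
  obtain ⟨n, hn1, hn⟩ := h ε hε
  refine ⟨n, hn1, fun x => ?_⟩
  set A : NonemptyCompacts X := ⟨⟨{x}, isCompact_singleton⟩, Set.singleton_nonempty x⟩
  have hd := hn A
  rw [NonemptyCompacts.dist_eq, inducedMap_iterate] at hd
  have hmem : T^[n] x ∈ T^[n] '' (A : Set X) := ⟨x, rfl, rfl⟩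
  obtain ⟨b, hb, hbd⟩ := exists_dist_lt_of_hausdorffDist_lt hmem hd
    (Metric.hausdorffEdist_ne_top_of_nonempty_of_bounded (A.nonempty.image _) A.nonempty
      (A.isCompact.image (hT.iterate n)).isBounded A.isCompact.isBounded)
  have : b = x := hb
  rwa [this] at hbd

lemma wr_to_ur_base {X : Type*} [MetricSpace X] [CompactSpace X]
    {T : X → X} (hT : Continuous T) (h : WeaklyRigid (inducedMap hT)) :
    UniformlyRigid T := by
  intro ε hε
  -- finite ε/4-net
  have hcov : (Set.univ : Set X) ⊆ ⋃ x : X, Metric.ball x (ε/4) := by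
    intro x _; exact Set.mem_iUnion.2 ⟨x, Metric.mem_ball_self (by positivity)⟩
  obtain ⟨s, hs⟩ := isCompact_univ.elim_finite_subcover
    (fun x : X => Metric.ball x (ε/4)) (fun x => isOpen_ball) hcov
  -- tuple of closed balls
  have hsne : ∀ x : X, ∃ c ∈ s, x ∈ Metric.ball c (ε/4) := by
    intro x
    have := hs (Set.mem_univ x)
    simpa using this
  set A : Fin s.card → NonemptyCompacts X := fun i =>
    ⟨⟨Metric.closedBall (s.equivFin.symm i : X) (ε/4),
      isCompact_closedBall _ _⟩, Metric.nonempty_closedBall.2 (by positivity)⟩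
  obtain ⟨j, hj1, hj⟩ := h s.card A (ε/4) (by positivity) 1
  refine ⟨j, hj1, fun x => ?_⟩
  obtain ⟨c, hc, hxc⟩ := hsne x
  set i : Fin s.card := s.equivFin ⟨c, hc⟩
  have hci : (s.equivFin.symm i : X) = c := by simp [i]
  have hd := hj i
  rw [NonemptyCompacts.dist_eq, inducedMap_iterate] at hd
  have hxA : x ∈ (A i : Set X) := by
    show x ∈ Metric.closedBall _ _
    rw [hci]
    exact Metric.ball_subset_closedBall hxc
  have hmem : T^[j] x ∈ T^[j] '' (A i : Set X) := ⟨x, hxA, rfl⟩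
  obtain ⟨b, hb, hbd⟩ := exists_dist_lt_of_hausdorffDist_lt hmem hd
    (Metric.hausdorffEdist_ne_top_of_nonempty_of_bounded ((A i).nonempty.image _)
      (A i).nonempty ((A i).isCompact.image (hT.iterate j)).isBounded
      (A i).isCompact.isBounded)
  have hbc : dist b c ≤ ε/4 := by
    have : dist b (s.equivFin.symm i : X) ≤ ε/4 := hb
    rwa [hci] at this
  have hxc' : dist x c ≤ ε/4 := by
    have : dist x (s.equivFin.symm i : X) ≤ ε/4 := hxA
    rwa [hci] at this
  have htri := dist_triangle4 (T^[j] x) b c x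
  have : dist c x = dist x c := dist_comm c x
  linarith

theorem uniformlyRigid_tfae {X : Type*} [MetricSpace X] [CompactSpace X]
    (T : X → X) (hT : Continuous T) (hsurj : Function.Surjective T) :
    (UniformlyRigid T ↔ UniformlyRigid (inducedMap hT)) ∧
      (UniformlyRigid (inducedMap hT) ↔ WeaklyRigid (inducedMap hT)) := by
  refine ⟨⟨ur_base_to_hyper hT, ur_hyper_to_base hT⟩,
    ⟨fun h => h.weaklyRigid, fun h => ur_base_to_hyper hT (wr_to_ur_base hT h)⟩⟩
end

section
/- If the hyperspace system (K(X), T_K) has a dense set of positively recurrent points then (X,T) has a dense set of recurrent points. -/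
open TopologicalSpace Metric Set

/-- A point `x` is positively recurrent for `T`. -/
def RecurrentPt {Y : Type*} [MetricSpace Y] (T : Y → Y) (x : Y) : Prop :=
  ∀ ε > (0:ℝ), ∀ N : ℕ, ∃ n ≥ N, dist (T^[n] x) x < ε


/-! Take an open ball `V` around `x` and a `T_K`-recurrent compact set `A ⊆ V`. Nesting the
neighbourhoods of `A` along its return times shows that the set `{n | T^n A ⊆ V}` contains an
IP-set `FS(m)`. An idempotent ultrafilter `U ∋ FS(m)` (Hindman) yields the limit `y` of `T^n a`
along `U` for any `a ∈ A`; then `y ∈ cl V`, and idempotence `U + U = U` makes `y` recurrent. -/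

open Filter Topology Hindman

attribute [local instance] Ultrafilter.add

lemma inducedMap_iterate_coe {X : Type*} [MetricSpace X] {T : X → X} (hT : Continuous T)
    (A : NonemptyCompacts X) (n : ℕ) : ((inducedMap hT)^[n] A : Set X) = T^[n] '' A := by
  induction n with
  | zero => simp
  | succ n ih => rw [Function.iterate_succ_apply', Function.iterate_succ', image_comp, ← ih]; rfl

lemma continuous_inducedMap {X : Type*} [MetricSpace X] {T : X → X} (hT : Continuous T) :
    Continuous (inducedMap hT) :=
  hT.nonemptyCompacts_map

lemma Hindman.pos_of_mem_FS {m : Stream' ℕ} (hm : ∀ i, 0 < m.get i) {S : ℕ} (hS : S ∈ FS m) :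
    0 < S := by
  induction hS with
  | head' a => exact hm 0
  | tail' a S _ ih => exact ih fun i => hm (i + 1)
  | cons' a S _ ih => exact Nat.add_pos_left (hm 0) _

lemma Ultrafilter.le_atTop_of_add_self {U : Ultrafilter ℕ} (hU : U + U = U)
    (hpos : ∀ᶠ n in U, 0 < n) : (U : Filter ℕ) ≤ atTop := by
  rcases U.le_cofinite_or_eq_pure with h | ⟨a, rfl⟩
  · exact Nat.cofinite_eq_atTop ▸ h
  · have h2a : ∀ᶠ n in (pure a : Ultrafilter ℕ), n = a + a := by
      rw [← hU, Ultrafilter.eventually_add]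
      simp
    have ha : 0 < a := hpos
    have : a = a + a := h2a
    omega

section Recurrence

variable {Z : Type*} [MetricSpace Z] {F : Z → Z}

lemma RecurrentPt.exists_iterate_mem {p : Z} (hp : RecurrentPt F p) {W : Set Z} (hW : W ∈ 𝓝 p)
    (N : ℕ) : ∃ n ≥ N, F^[n] p ∈ W := by
  obtain ⟨ε, hε, hball⟩ := Metric.mem_nhds_iff.1 hW
  obtain ⟨n, hnN, hn⟩ := hp ε hε N
  exact ⟨n, hnN, hball hn⟩

lemma RecurrentPt.exists_FS_iterate_mem (hF : Continuous F) {p : Z} (hp : RecurrentPt F p)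
    {W : Set Z} (hW : IsOpen W) (hpW : p ∈ W) :
    ∃ m : Stream' ℕ, (∀ i, 0 < m.get i) ∧ ∀ S ∈ FS m, F^[S] p ∈ W := by
  let Nbhd := {V : Set Z // IsOpen V ∧ p ∈ V}
  choose n hn_pos hn_mem using fun V : Nbhd => hp.exists_iterate_mem (V.2.1.mem_nhds V.2.2) 1
  -- Shrinking `V` to the points that also return to `V` after `n V` steps makes every finite
  -- sum of the successive return times a return time into the first set.
  let shrink (V : Nbhd) : Nbhd :=
    ⟨V.1 ∩ F^[n V] ⁻¹' V.1, V.2.1.inter (V.2.1.preimage (hF.iterate _)), V.2.2, hn_mem V⟩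
  let times (V : Nbhd) : Stream' ℕ := fun k => n (shrink^[k] V)
  have hreturn : ∀ a S, S ∈ FS a → ∀ V, a = times V → F^[S] p ∈ V.1 := by
    intro a S hS
    induction hS with
    | head' a => rintro V rfl; exact hn_mem V
    | tail' a S _ ih => rintro V rfl; exact (ih (shrink V) rfl).1
    | cons' a S _ ih =>
      rintro V rfl
      rw [Function.iterate_add_apply]
      exact (ih (shrink V) rfl).2
  exact ⟨times ⟨W, hW, hpW⟩, fun k => hn_pos _, fun S hS => hreturn _ S hS _ rfl⟩

lemma recurrentPt_of_tendsto_iterate (hF : Continuous F) {U : Ultrafilter ℕ} (hU : U + U = U)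
    (hU_top : (U : Filter ℕ) ≤ atTop) {a y : Z}
    (hy : Tendsto (fun n => F^[n] a) U (𝓝 y)) : RecurrentPt F y := by
  intro ε hε N
  have hnear : ∀ᶠ n in U, F^[n] a ∈ ball y (ε / 2) := hy (ball_mem_nhds y (by linarith))
  have hnear₂ : ∀ᶠ n in U, ∀ᶠ k in U, F^[n + k] a ∈ ball y (ε / 2) := by
    rw [← hU] at hnear
    exact (Ultrafilter.eventually_add U U _).1 hnear
  obtain ⟨n, hn, hnN⟩ := (hnear₂.and (hU_top (eventually_ge_atTop N))).exists
  have hlim : Tendsto (fun k => F^[n] (F^[k] a)) U (𝓝 (F^[n] y)) :=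
    ((hF.iterate n).tendsto y).comp hy
  have hle : F^[n] y ∈ closedBall y (ε / 2) :=
    isClosed_closedBall.mem_of_tendsto hlim <| hn.mono fun k hk => by
      rw [← Function.iterate_add_apply]
      exact ball_subset_closedBall hk
  exact ⟨n, hnN, (mem_closedBall.1 hle).trans_lt (by linarith)⟩

lemma exists_recurrentPt_mem_of_FS [CompactSpace Z] (hF : Continuous F) {C : Set Z}
    (hC : IsClosed C) {a : Z} {m : Stream' ℕ} (hm : ∀ i, 0 < m.get i)
    (hmC : ∀ S ∈ FS m, F^[S] a ∈ C) : ∃ y ∈ C, RecurrentPt F y := by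
  obtain ⟨U, hU, hUm⟩ := exists_idempotent_ultrafilter_le_FS m
  have hFS : FS m ∈ U := hUm
  have hU_top :=
    Ultrafilter.le_atTop_of_add_self hU (mem_of_superset hFS fun S => pos_of_mem_FS hm)
  obtain ⟨y, -, hy⟩ := isCompact_univ.ultrafilter_le_nhds (U.map fun n => F^[n] a) (by simp)
  exact ⟨y, hC.mem_of_tendsto hy (mem_of_superset hFS hmC),
    recurrentPt_of_tendsto_iterate hF hU hU_top hy⟩

end Recurrence

theorem dense_recurrent_of_dense_recurrent_induced_general {X : Type*} [MetricSpace X]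
    [CompactSpace X] (T : X → X) (hT : Continuous T)
    (h : Dense {A : NonemptyCompacts X | RecurrentPt (inducedMap hT) A}) :
    Dense {x : X | RecurrentPt T x} := by
  refine Metric.dense_iff.2 fun x r hr => ?_
  let W : Set (NonemptyCompacts X) := {K | (K : Set X) ⊆ ball x (r / 2)}
  have hW : IsOpen W := NonemptyCompacts.isOpen_subsets_of_isOpen isOpen_ball
  obtain ⟨A, hAW, hA⟩ := h.inter_open_nonempty W hW ⟨{x}, by simpa [W] using half_pos hr⟩
  obtain ⟨m, hm, hmW⟩ := hA.exists_FS_iterate_mem (continuous_inducedMap hT) hW hAW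
  obtain ⟨a, ha⟩ := A.nonempty
  have horbit : ∀ S ∈ FS m, T^[S] a ∈ closedBall x (r / 2) := fun S hS =>
    ball_subset_closedBall <| hmW S hS <| by
      rw [inducedMap_iterate_coe]
      exact mem_image_of_mem _ ha
  obtain ⟨y, hy, hy_rec⟩ := exists_recurrentPt_mem_of_FS hT isClosed_closedBall hm horbit
  exact ⟨y, closedBall_subset_ball (by linarith) hy, hy_rec⟩

theorem dense_recurrent_of_dense_recurrent_induced {X : Type*} [MetricSpace X]
    [CompactSpace X] (T : X → X) (hT : Continuous T) (hsurj : Function.Surjective T)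
    (h : Dense {A : NonemptyCompacts X | RecurrentPt (inducedMap hT) A}) :
    Dense {x : X | RecurrentPt T x} :=
  dense_recurrent_of_dense_recurrent_induced_general T hT h
end
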